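/- Let p ≠ q be points in the plane, let x be a point of the open segment (p, q), let H⁻ and H⁺ be the two open halfplanes bounded by line pq, and let z ∈ H⁺. Then there exists δ > 0 such that for every r ∈ H⁻ with ‖r − x‖ < δ, the point z lies in the open interior of the circumdisc of p, q, r. -/

import Mathlib

noncomputable section

/-- Points of the Euclidean plane. -/
abbrev Pt := EuclideanSpace ℝ (Fin 2)

/-- The orientation (cross product) determinant of the triple `(p, q, r)`. -/
def orient (p q r : Pt) : ℝ :=
  (q 0 - p 0) * (r 1 - p 1) - (q 1 - p 1) * (r 0 - p 0)

/-!
Put `m = midpoint p q` and let `n` be `q - p` rotated by a right angle, so that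
`⟪w - m, n⟫ = orient p q w`. Every point `c = m + t • n` is equidistant from `p` and `q`, and
`dist w c ^ 2 - dist p c ^ 2 = P w - 2 t · orient p q w`, where `P w = dist w m ^ 2 - dist p m ^ 2`
is the power of `w` with respect to the circle with diameter `pq`.
For `r ∈ H⁻` the choice `2 t = P r / orient p q r` puts `r` on the circle about `c`. As `r → x`
this tends to `+∞`, because `P x < 0` while `orient p q r → 0⁻`; once it exceeds
`P z / orient p q z`, the point `z` is strictly inside that circle.
-/

open Filter Topology
open scoped RealInnerProductSpace

theorem dist_midpoint_lt_of_mem_openSegment {E : Type*} [NormedAddCommGroup E]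
    [NormedSpace ℝ E] {p q x : E} (hpq : p ≠ q) (hx : x ∈ openSegment ℝ p q) :
    dist x (midpoint ℝ p q) < dist p (midpoint ℝ p q) := by
  rw [openSegment_eq_image_lineMap] at hx
  obtain ⟨b, ⟨hb0, hb1⟩, rfl⟩ := hx
  have hdist : dist (AffineMap.lineMap p q b) (midpoint ℝ p q) = dist b ⅟2 * dist p q :=
    dist_lineMap_lineMap p q b ⅟2
  rw [hdist, dist_left_midpoint, Real.norm_two]
  refine mul_lt_mul_of_pos_right ?_ (dist_pos.2 hpq)
  rw [invOf_eq_inv, Real.dist_eq, abs_lt]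
  constructor <;> linarith

section InnerProductSpace

variable {V : Type*} [NormedAddCommGroup V] [InnerProductSpace ℝ V]

theorem dist_sq_add_smul_sub_dist_sq (m n w p : V) (t : ℝ) (hp : ⟪p - m, n⟫ = 0) :
    dist w (m + t • n) ^ 2 - dist p (m + t • n) ^ 2
      = dist w m ^ 2 - dist p m ^ 2 - 2 * t * ⟪w - m, n⟫ := by
  have hsq (v : V) :
      dist v (m + t • n) ^ 2 = dist v m ^ 2 - 2 * t * ⟪v - m, n⟫ + t ^ 2 * ‖n‖ ^ 2 := by
    rw [dist_eq_norm, dist_eq_norm, sub_add_eq_sub_sub, norm_sub_sq_real, real_inner_smul_right,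
      norm_smul, Real.norm_eq_abs, mul_pow, sq_abs]
    ring
  rw [hsq, hsq, hp]
  ring

theorem dist_add_smul_eq_iff {m n w p : V} {t : ℝ} (hp : ⟪p - m, n⟫ = 0) :
    dist w (m + t • n) = dist p (m + t • n) ↔ dist w m ^ 2 - dist p m ^ 2 = 2 * t * ⟪w - m, n⟫ := by
  rw [← sq_eq_sq₀ dist_nonneg dist_nonneg, ← sub_eq_zero, dist_sq_add_smul_sub_dist_sq m n w p t hp,
    sub_eq_zero]

theorem dist_add_smul_lt_iff {m n w p : V} {t : ℝ} (hp : ⟪p - m, n⟫ = 0) :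
    dist w (m + t • n) < dist p (m + t • n) ↔ dist w m ^ 2 - dist p m ^ 2 < 2 * t * ⟪w - m, n⟫ := by
  rw [← pow_lt_pow_iff_left₀ dist_nonneg dist_nonneg two_ne_zero, ← sub_neg,
    dist_sq_add_smul_sub_dist_sq m n w p t hp, sub_neg]

end InnerProductSpace

def perp (v : Pt) : Pt := !₂[-v 1, v 0]

theorem inner_sub_midpoint_perp (p q w : Pt) :
    ⟪w - midpoint ℝ p q, perp (q - p)⟫ = orient p q w := by
  simp only [perp, orient, midpoint_eq_smul_add, invOf_eq_inv, PiLp.inner_apply, PiLp.sub_apply,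
    PiLp.add_apply, PiLp.smul_apply, smul_eq_mul, RCLike.inner_apply, Real.ringHom_apply,
    Fin.sum_univ_two, Matrix.cons_val_zero, Matrix.cons_val_one]
  ring

theorem orient_self_left (p q : Pt) : orient p q p = 0 := by
  unfold orient; ring

theorem orient_self_right (p q : Pt) : orient p q q = 0 := by
  unfold orient; ring

theorem continuous_orient (p q : Pt) : Continuous (orient p q) := by
  simp_rw [← funext (inner_sub_midpoint_perp p q)]
  fun_prop

theorem orient_eq_zero_of_mem_openSegment {p q x : Pt} (hx : x ∈ openSegment ℝ p q) :
    orient p q x = 0 := by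
  obtain ⟨a, b, -, -, hab, rfl⟩ := hx
  rw [eq_sub_of_add_eq hab]
  simp only [orient, PiLp.add_apply, PiLp.smul_apply, smul_eq_mul]
  ring

theorem tendsto_power_div_orient_atTop {p q x : Pt} (hpq : p ≠ q) (hx : x ∈ openSegment ℝ p q) :
    Tendsto (fun r => (dist r (midpoint ℝ p q) ^ 2 - dist p (midpoint ℝ p q) ^ 2) / orient p q r)
      (𝓝[{r | orient p q r < 0}] x) atTop := by
  have hpow : Tendsto (fun r => dist r (midpoint ℝ p q) ^ 2 - dist p (midpoint ℝ p q) ^ 2)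
      (𝓝[{r | orient p q r < 0}] x)
      (𝓝 (dist x (midpoint ℝ p q) ^ 2 - dist p (midpoint ℝ p q) ^ 2)) :=
    (Continuous.tendsto (by fun_prop) x).mono_left nhdsWithin_le_nhds
  have horient : Tendsto (orient p q) (𝓝[{r | orient p q r < 0}] x) (𝓝[<] 0) := by
    refine tendsto_nhdsWithin_iff.2 ⟨?_, self_mem_nhdsWithin⟩
    rw [← orient_eq_zero_of_mem_openSegment hx]
    exact ((continuous_orient p q).tendsto x).mono_left nhdsWithin_le_nhds
  have hneg : dist x (midpoint ℝ p q) ^ 2 - dist p (midpoint ℝ p q) ^ 2 < 0 :=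
    sub_neg.2 <|
      pow_lt_pow_left₀ (dist_midpoint_lt_of_mem_openSegment hpq hx) dist_nonneg two_ne_zero
  simpa only [div_eq_mul_inv, Function.comp_def] using
    hpow.neg_mul_atBot hneg (tendsto_inv_nhdsLT_zero.comp horient)

/-- Let `x` be a point of the open segment `(p, q)` and let `z` lie in the open
halfplane `H⁺ = {orient p q · > 0}`.  Then for every point `r` of the opposite open
halfplane `H⁻` close enough to `x`, the point `z` lies in the open interior of the
circumdisc of `p, q, r`. -/
theorem stmt11 (p q x z : Pt) (hpq : p ≠ q)
    (hx : x ∈ openSegment ℝ p q) (hz : 0 < orient p q z) :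
    ∃ δ > 0, ∀ r : Pt, orient p q r < 0 → dist r x < δ →
      ∃ c : Pt, ∃ ρ : ℝ,
        dist p c = ρ ∧ dist q c = ρ ∧ dist r c = ρ ∧ dist z c < ρ := by
  set m := midpoint ℝ p q
  set P : Pt → ℝ := fun w => dist w m ^ 2 - dist p m ^ 2
  have hp : ⟪p - m, perp (q - p)⟫ = 0 := by rw [inner_sub_midpoint_perp, orient_self_left]
  have hev : ∀ᶠ r in 𝓝[{r | orient p q r < 0}] x, P z / orient p q z < P r / orient p q r :=
    (tendsto_power_div_orient_atTop hpq hx).eventually_gt_atTop _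
  obtain ⟨δ, hδ, hr⟩ := Metric.eventually_nhds_iff.1 (eventually_nhdsWithin_iff.1 hev)
  refine ⟨δ, hδ, fun r hro hrx => ?_⟩
  set c := m + (P r / orient p q r / 2) • perp (q - p)
  refine ⟨c, dist p c, rfl, ?_, ?_, ?_⟩
  · rw [dist_add_smul_eq_iff hp, inner_sub_midpoint_perp, orient_self_right,
      dist_right_midpoint, dist_left_midpoint]
    ring
  · rw [dist_add_smul_eq_iff hp, inner_sub_midpoint_perp, mul_div_cancel₀ _ two_ne_zero]
    exact (div_mul_cancel₀ _ hro.ne).symm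
  · rw [dist_add_smul_lt_iff hp, inner_sub_midpoint_perp]
    have := (div_lt_iff₀ hz).1 (hr hrx hro)
    linarith
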